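/- Let d ≥ 1 and let μ, ν₁, …, ν_N be Borel probability measures on ℝ^d with finite second moments, α₁, …, α_N ≥ 0 with Σᵢ αᵢ = 1, and τ > 0. For each i, let γᵢ be a coupling attaining the infimum defining W²_{2,ub}(μ, νᵢ), with disintegration γᵢ = μ ⊗ γ_{i,x}, conditional means Tᵢ(x) = ∫ y dγ_{i,x}(y), and T̄(x) = Σᵢ αᵢ Tᵢ(x). Then, with V(ρ) = Σᵢ αᵢ W²_{2,ub}(ρ, νᵢ), one has V(μ) = V(T̄_#μ) if and only if T̄(x) = x for μ-almost every x. -/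

import Mathlib

open MeasureTheory ENNReal

noncomputable section

/-- Euclidean space ℝ^d. -/
abbrev Ed (d : ℕ) := EuclideanSpace ℝ (Fin d)

/-- The entropy function ψ(t) = t log t − t + 1 (equal to 1 at t = 0 since log 0 = 0). -/
def entropyPsi (t : ℝ) : ℝ := t * Real.log t - t + 1

open Classical in
/-- The Csiszár divergence D_ψ(ρ‖ν) for the entropy function ψ. -/
def Dpsi {d : ℕ} (ρ ν : Measure (Ed d)) : ℝ≥0∞ :=
  if ρ ≪ ν then ∫⁻ y, ENNReal.ofReal (entropyPsi ((ρ.rnDeriv ν) y).toReal) ∂ν else ⊤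

/-- Squared unbalanced Wasserstein cost W²_{2,ub,τ}(μ,ν). -/
def UOTcost {d : ℕ} (τ : ℝ) (μ ν : Measure (Ed d)) : ℝ≥0∞ :=
  ⨅ (π : Measure (Ed d × Ed d)) (_ : π.map Prod.fst = μ),
    (∫⁻ p, ENNReal.ofReal (‖p.1 - p.2‖ ^ 2 / 2) ∂π)
      + ENNReal.ofReal τ * Dpsi (π.map Prod.snd) ν

/-- γ is an optimal coupling for the unbalanced problem W²_{2,ub,τ}(μ,ν). -/
def IsOptimalCoupling {d : ℕ} (τ : ℝ) (μ ν : Measure (Ed d))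
    (γ : Measure (Ed d × Ed d)) : Prop :=
  γ.map Prod.fst = μ ∧
    (∫⁻ p, ENNReal.ofReal (‖p.1 - p.2‖ ^ 2 / 2) ∂γ)
      + ENNReal.ofReal τ * Dpsi (γ.map Prod.snd) ν = UOTcost τ μ ν

/-- The Fréchet objective V(ρ) = Σᵢ αᵢ W²_{2,ub,τ}(ρ, νᵢ). -/
def Vfun {d : ℕ} (τ : ℝ) {N : ℕ} (α : Fin N → ℝ) (ν : Fin N → Measure (Ed d))
    (ρ : Measure (Ed d)) : ℝ≥0∞ :=
  ∑ i, ENNReal.ofReal (α i) * UOTcost τ ρ (ν i)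

/-!
Pushing an optimal coupling `γᵢ` forward along `(x, y) ↦ (Tbar x, y)` gives a competitor for
`W²(Tbar_# μ, νᵢ)` with the same second marginal, hence the same entropy term. In the expansion
`‖Tbar x - y‖² = ‖x - y‖² + 2⟪Tbar x - x, x - y⟫ + ‖Tbar x - x‖²`, disintegrating `γᵢ` replaces
`y` by `Tᵢ x` in the cross term, and averaging with the weights `αᵢ` turns `x - Tᵢ x` into
`x - Tbar x`. Hence `V(Tbar_# μ) + ½ ∫ ‖Tbar x - x‖² dμ ≤ V(μ)`, so equality of the objectives
forces `Tbar = id` `μ`-a.e.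
-/

section InnerProductSpace

variable {α E : Type*} {mα : MeasurableSpace α} {μ : Measure α}
  [NormedAddCommGroup E] [InnerProductSpace ℝ E]

theorem MeasureTheory.MemLp.integrable_norm_sq {F : Type*} [NormedAddCommGroup F] {f : α → F}
    (hf : MemLp f 2 μ) : Integrable (fun x ↦ ‖f x‖ ^ 2) μ :=
  (memLp_two_iff_integrable_sq_norm hf.1).1 hf

theorem MeasureTheory.MemLp.integrable_inner {f g : α → E} (hf : MemLp f 2 μ)
    (hg : MemLp g 2 μ) : Integrable (fun x ↦ inner ℝ (f x) (g x)) μ :=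
  memLp_one_iff_integrable.1 <| hf.of_bilin (fun u v ↦ inner ℝ u v) 1 hg (hf.1.inner hg.1)
    (ae_of_all _ fun x ↦ by simpa using nnnorm_inner_le_nnnorm (𝕜 := ℝ) (f x) (g x))

theorem sq_norm_integral_le_integral_sq_norm [CompleteSpace E] [IsProbabilityMeasure μ]
    {f : α → E} (hf : Integrable f μ) (hf2 : Integrable (fun x ↦ ‖f x‖ ^ 2) μ) :
    ‖∫ x, f x ∂μ‖ ^ 2 ≤ ∫ x, ‖f x‖ ^ 2 ∂μ :=
  (convexOn_univ_norm.pow (fun _ _ ↦ norm_nonneg _) 2).map_integral_le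
    (continuous_norm.pow 2).continuousOn isClosed_univ (ae_of_all _ fun _ ↦ Set.mem_univ _)
    hf hf2

theorem sum_mul_inner_sub_add_half_norm_sq {ι : Type*} (s : Finset ι) {w : ι → ℝ}
    (hw : ∑ i ∈ s, w i = 1) (v : ι → E) (x : E) :
    ∑ i ∈ s, w i * (inner ℝ (∑ j ∈ s, w j • v j - x) (x - v i)
      + ‖∑ j ∈ s, w j • v j - x‖ ^ 2 / 2) = -(‖∑ j ∈ s, w j • v j - x‖ ^ 2 / 2) := by
  set b := ∑ j ∈ s, w j • v j
  have hx : ∑ i ∈ s, w i • (x - v i) = x - b := by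
    simp only [smul_sub, Finset.sum_sub_distrib, ← Finset.sum_smul, hw, one_smul, b]
  simp only [mul_add, Finset.sum_add_distrib, ← Finset.sum_mul, hw, one_mul,
    ← real_inner_smul_right, ← inner_sum, hx, ← neg_sub b x, inner_neg_right, real_inner_self_eq_norm_sq]
  ring

end InnerProductSpace

section BarycentricProjection

variable {α E : Type*} {mα : MeasurableSpace α}
  [NormedAddCommGroup E] [InnerProductSpace ℝ E] [CompleteSpace E] [MeasurableSpace E]
  [BorelSpace E] [SecondCountableTopology E]

def barycentricProjection (γ : Measure (α × E)) [IsFiniteMeasure γ] (x : α) : E :=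
  ∫ y, y ∂γ.condKernel x

variable {γ : Measure (α × E)} [IsFiniteMeasure γ]

theorem stronglyMeasurable_barycentricProjection :
    StronglyMeasurable (barycentricProjection γ) :=
  StronglyMeasurable.integral_kernel_prod_right' (f := fun p : α × E ↦ p.2)
    measurable_snd.stronglyMeasurable

@[fun_prop]
theorem measurable_barycentricProjection : Measurable (barycentricProjection γ) :=
  stronglyMeasurable_barycentricProjection.measurable

theorem memLp_barycentricProjection (hy : MemLp Prod.snd 2 γ) :
    MemLp (barycentricProjection γ) 2 γ.fst := by
  have hm := stronglyMeasurable_barycentricProjection (γ := γ)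
  refine (memLp_two_iff_integrable_sq_norm hm.aestronglyMeasurable).2 <|
    hy.integrable_norm_sq.integral_condKernel.mono' (hm.norm.pow 2).aestronglyMeasurable ?_
  filter_upwards [(hy.integrable one_le_two).condKernel_ae,
    hy.integrable_norm_sq.condKernel_ae] with x hx hx2
  rw [Real.norm_of_nonneg (by positivity)]
  exact sq_norm_integral_le_integral_sq_norm hx hx2

theorem integral_inner_snd_eq_integral_inner_barycentricProjection {h : α → E}
    (hh : MemLp h 2 γ.fst) (hy : MemLp Prod.snd 2 γ) :
    ∫ p, inner ℝ (h p.1) p.2 ∂γ = ∫ x, inner ℝ (h x) (barycentricProjection γ x) ∂γ.fst := by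
  have hh' : MemLp (fun p : α × E ↦ h p.1) 2 γ := hh.comp_of_map measurable_fst.aemeasurable
  rw [← Measure.integral_condKernel (hh'.integrable_inner hy)]
  refine integral_congr_ae ?_
  filter_upwards [(hy.integrable one_le_two).condKernel_ae] with x hx
  exact integral_inner hx (h x)

def averageMap {ι : Type*} [Fintype ι] (w : ι → ℝ) (γ : ι → Measure (α × E))
    [∀ i, IsFiniteMeasure (γ i)] (x : α) : E :=
  ∑ i, w i • barycentricProjection (γ i) x

variable {ι : Type*} [Fintype ι] {w : ι → ℝ} {γ : ι → Measure (α × E)}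
  [∀ i, IsFiniteMeasure (γ i)]

@[fun_prop]
theorem measurable_averageMap : Measurable (averageMap w γ) := by
  unfold averageMap
  fun_prop

theorem memLp_averageMap {μ : Measure α} (hfst : ∀ i, (γ i).fst = μ)
    (hy : ∀ i, MemLp Prod.snd 2 (γ i)) : MemLp (averageMap w γ) 2 μ :=
  memLp_finsetSum _ fun i _ ↦ (hfst i ▸ memLp_barycentricProjection (hy i)).const_smul (w i)

end BarycentricProjection

section Displacement

variable {E : Type*} [NormedAddCommGroup E] [InnerProductSpace ℝ E] [CompleteSpace E]
  [MeasurableSpace E] [BorelSpace E] [SecondCountableTopology E]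
  {γ : Measure (E × E)} [IsFiniteMeasure γ]

theorem integral_half_norm_sub_sq_comp_fst {S : E → E} (hS : MemLp S 2 γ.fst)
    (hx : MemLp id 2 γ.fst) (hy : MemLp Prod.snd 2 γ) :
    ∫ p, ‖S p.1 - p.2‖ ^ 2 / 2 ∂γ = ∫ p, ‖p.1 - p.2‖ ^ 2 / 2 ∂γ +
      ∫ x, (inner ℝ (S x - x) (x - barycentricProjection γ x) + ‖S x - x‖ ^ 2 / 2) ∂γ.fst := by
  set g : E → E := fun x ↦ S x - x
  set ψ : E → ℝ := fun x ↦ inner ℝ (g x) x + ‖g x‖ ^ 2 / 2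
  have hg : MemLp g 2 γ.fst := hS.sub hx
  have hψ : Integrable ψ γ.fst :=
    (hg.integrable_inner hx).add (hg.integrable_norm_sq.div_const 2)
  have hψ' : Integrable (fun p : E × E ↦ ψ p.1) γ := hψ.comp_measurable measurable_fst
  have hgy : Integrable (fun p : E × E ↦ inner ℝ (g p.1) p.2) γ :=
    (hg.comp_of_map measurable_fst.aemeasurable).integrable_inner hy
  have hxy : Integrable (fun p : E × E ↦ ‖p.1 - p.2‖ ^ 2 / 2) γ :=
    ((hx.comp_of_map measurable_fst.aemeasurable).sub hy).integrable_norm_sq.div_const 2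
  have hrest : Integrable (fun p : E × E ↦ ψ p.1 - inner ℝ (g p.1) p.2) γ := hψ'.sub hgy
  have expand (p : E × E) : ‖S p.1 - p.2‖ ^ 2 / 2 =
      ‖p.1 - p.2‖ ^ 2 / 2 + (ψ p.1 - inner ℝ (g p.1) p.2) := by
    rw [show S p.1 - p.2 = g p.1 + (p.1 - p.2) by simp [g], norm_add_sq_real, inner_sub_right]
    ring
  have regroup (x : E) : inner ℝ (S x - x) (x - barycentricProjection γ x) + ‖S x - x‖ ^ 2 / 2 =
      ψ x - inner ℝ (g x) (barycentricProjection γ x) := by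
    simp only [ψ, g, inner_sub_right]
    ring
  simp_rw [expand, regroup]
  rw [integral_add hxy hrest, integral_sub hψ' hgy,
    integral_sub hψ (hg.integrable_inner (memLp_barycentricProjection hy)),
    integral_inner_snd_eq_integral_inner_barycentricProjection hg hy,
    ← integral_map measurable_fst.aemeasurable hψ.1]
  rfl

end Displacement

section UnbalancedTransport

variable {d : ℕ}

theorem Dpsi_self (ν : Measure (Ed d)) [SigmaFinite ν] : Dpsi ν ν = 0 := by
  rw [Dpsi, if_pos Measure.AbsolutelyContinuous.rfl, lintegral_congr_ae (g := 0)]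
  · simp
  filter_upwards [Measure.rnDeriv_self ν] with y hy
  simp [hy, entropyPsi]

theorem integrable_of_lintegral_cost_ne_top {π : Measure (Ed d × Ed d)}
    (h : ∫⁻ p, ENNReal.ofReal (‖p.1 - p.2‖ ^ 2 / 2) ∂π ≠ ⊤) :
    Integrable (fun p : Ed d × Ed d ↦ ‖p.1 - p.2‖ ^ 2 / 2) π :=
  ⟨by fun_prop, (hasFiniteIntegral_iff_ofReal (ae_of_all _ fun _ ↦ by positivity)).2 h.lt_top⟩

theorem UOTcost_ne_top (τ : ℝ) {μ ν : Measure (Ed d)} [IsProbabilityMeasure μ]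
    [IsProbabilityMeasure ν] (hμ : MemLp id 2 μ) (hν : MemLp id 2 ν) : UOTcost τ μ ν ≠ ⊤ := by
  have hcost : Integrable (fun p : Ed d × Ed d ↦ ‖p.1 - p.2‖ ^ 2 / 2) (μ.prod ν) :=
    ((hμ.comp_fst ν).sub (hν.comp_snd μ)).integrable_norm_sq.div_const 2
  refine ne_top_of_le_ne_top ?_ (iInf₂_le (μ.prod ν) (by simp))
  rw [Measure.map_snd_prod, measure_univ, one_smul, Dpsi_self, mul_zero, add_zero]
  exact hcost.lintegral_lt_top.ne

theorem UOTcost_map_le (τ : ℝ) {μ ν : Measure (Ed d)} {γ : Measure (Ed d × Ed d)}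
    (hγ : γ.map Prod.fst = μ) {S : Ed d → Ed d} (hS : Measurable S) :
    UOTcost τ (μ.map S) ν ≤ (∫⁻ p, ENNReal.ofReal (‖S p.1 - p.2‖ ^ 2 / 2) ∂γ)
      + ENNReal.ofReal τ * Dpsi (γ.map Prod.snd) ν := by
  have hF : Measurable fun p : Ed d × Ed d ↦ (S p.1, p.2) := by fun_prop
  refine (iInf₂_le (γ.map fun p ↦ (S p.1, p.2)) ?_).trans_eq ?_
  · rw [Measure.map_map measurable_fst hF, ← hγ, Measure.map_map hS measurable_fst]
    rfl
  · rw [Measure.map_map measurable_snd hF, lintegral_map (by fun_prop) hF]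
    rfl

end UnbalancedTransport

namespace IsOptimalCoupling

variable {d : ℕ} {τ : ℝ} {μ ν : Measure (Ed d)} {γ : Measure (Ed d × Ed d)}

theorem lintegral_cost_ne_top (hγ : IsOptimalCoupling τ μ ν γ) (h : UOTcost τ μ ν ≠ ⊤) :
    ∫⁻ p, ENNReal.ofReal (‖p.1 - p.2‖ ^ 2 / 2) ∂γ ≠ ⊤ :=
  (ENNReal.add_ne_top.1 (hγ.2 ▸ h)).1

theorem memLp_snd (hγ : IsOptimalCoupling τ μ ν γ) (hμ : MemLp id 2 μ)
    (h : UOTcost τ μ ν ≠ ⊤) : MemLp Prod.snd 2 γ := by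
  have hxy : MemLp (fun p : Ed d × Ed d ↦ p.1 - p.2) 2 γ :=
    (memLp_two_iff_integrable_sq_norm (by fun_prop)).2 <|
      ((integrable_of_lintegral_cost_ne_top (hγ.lintegral_cost_ne_top h)).const_mul 2).congr
        (ae_of_all _ fun _ ↦ by ring)
  have hx : MemLp (fun p : Ed d × Ed d ↦ p.1) 2 γ :=
    (hγ.1 ▸ hμ).comp_of_map measurable_fst.aemeasurable
  exact (hx.sub hxy).ae_eq (ae_of_all _ fun p ↦ sub_sub_cancel p.1 p.2)

end IsOptimalCoupling

theorem ENNReal.sum_ofReal_mul_add_ofReal_eq {ι : Type*} (s : Finset ι) {w a b : ι → ℝ} {r : ℝ}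
    (e : ι → ℝ≥0∞) (hw : ∀ i, 0 ≤ w i) (ha : ∀ i, 0 ≤ a i) (hb : ∀ i, 0 ≤ b i) (hr : 0 ≤ r)
    (h : ∑ i ∈ s, w i * a i + r = ∑ i ∈ s, w i * b i) :
    ∑ i ∈ s, ENNReal.ofReal (w i) * (ENNReal.ofReal (a i) + e i) + ENNReal.ofReal r
      = ∑ i ∈ s, ENNReal.ofReal (w i) * (ENNReal.ofReal (b i) + e i) := by
  have sum_ofReal {c : ι → ℝ} (hc : ∀ i, 0 ≤ c i) :
      ∑ i ∈ s, ENNReal.ofReal (w i) * ENNReal.ofReal (c i)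
        = ENNReal.ofReal (∑ i ∈ s, w i * c i) := by
    simp only [← ENNReal.ofReal_mul (hw _)]
    exact (ENNReal.ofReal_sum_of_nonneg fun i _ ↦ mul_nonneg (hw i) (hc i)).symm
  simp only [mul_add, Finset.sum_add_distrib, sum_ofReal ha, sum_ofReal hb]
  rw [add_right_comm,
    ← ENNReal.ofReal_add (Finset.sum_nonneg fun i _ ↦ mul_nonneg (hw i) (ha i)) hr, h]

theorem Vfun_map_averageMap_add_le {d N : ℕ} {τ : ℝ} {μ : Measure (Ed d)} (hμ : MemLp id 2 μ)
    {ν : Fin N → Measure (Ed d)} {α : Fin N → ℝ} (hα : ∀ i, 0 ≤ α i) (hαsum : ∑ i, α i = 1)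
    {γ : Fin N → Measure (Ed d × Ed d)} [∀ i, IsFiniteMeasure (γ i)]
    (hγ : ∀ i, IsOptimalCoupling τ μ (ν i) (γ i)) (hfin : ∀ i, UOTcost τ μ (ν i) ≠ ⊤) :
    Vfun τ α ν (μ.map (averageMap α γ))
      + ∫⁻ x, ENNReal.ofReal (‖averageMap α γ x - x‖ ^ 2 / 2) ∂μ
      ≤ Vfun τ α ν μ := by
  have hfst i : (γ i).fst = μ := (hγ i).1
  have hy i : MemLp Prod.snd 2 (γ i) := (hγ i).memLp_snd hμ (hfin i)
  have hT i : MemLp (barycentricProjection (γ i)) 2 μ := hfst i ▸ memLp_barycentricProjection (hy i)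
  set Tbar := averageMap α γ
  have hTbar : MemLp Tbar 2 μ := memLp_averageMap hfst hy
  have hdisp : MemLp (fun x ↦ Tbar x - x) 2 μ := hTbar.sub hμ
  set c : Fin N → ℝ := fun i ↦ ∫ p, ‖p.1 - p.2‖ ^ 2 / 2 ∂γ i
  set c' : Fin N → ℝ := fun i ↦ ∫ p, ‖Tbar p.1 - p.2‖ ^ 2 / 2 ∂γ i
  set φ : Fin N → Ed d → ℝ := fun i x ↦
    inner ℝ (Tbar x - x) (x - barycentricProjection (γ i) x) + ‖Tbar x - x‖ ^ 2 / 2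
  have hexpand i : c' i = c i + ∫ x, φ i x ∂μ := by
    have h := integral_half_norm_sub_sq_comp_fst (hfst i ▸ hTbar) (hfst i ▸ hμ) (hy i)
    rwa [hfst i] at h
  have hφ i : Integrable (φ i) μ :=
    (hdisp.integrable_inner (hμ.sub (hT i))).add (hdisp.integrable_norm_sq.div_const 2)
  have hsum_φ x : ∑ i, α i * φ i x = -(‖Tbar x - x‖ ^ 2 / 2) := by
    simp only [φ, Tbar, averageMap]
    exact sum_mul_inner_sub_add_half_norm_sq _ hαsum _ x
  have hbalance : ∑ i, α i * c' i + ∫ x, ‖Tbar x - x‖ ^ 2 / 2 ∂μ = ∑ i, α i * c i := by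
    simp only [hexpand, mul_add, Finset.sum_add_distrib, ← integral_const_mul]
    rw [← integral_finsetSum _ fun i _ ↦ (hφ i).const_mul (α i)]
    simp only [hsum_φ, integral_neg]
    ring
  have hcost i : ∫⁻ p, ENNReal.ofReal (‖p.1 - p.2‖ ^ 2 / 2) ∂γ i = ENNReal.ofReal (c i) :=
    (ofReal_integral_eq_lintegral_ofReal
      (integrable_of_lintegral_cost_ne_top ((hγ i).lintegral_cost_ne_top (hfin i)))
      (ae_of_all _ fun _ ↦ by positivity)).symm
  have hcost' i : ∫⁻ p, ENNReal.ofReal (‖Tbar p.1 - p.2‖ ^ 2 / 2) ∂γ i = ENNReal.ofReal (c' i) :=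
    (ofReal_integral_eq_lintegral_ofReal
      ((((hfst i ▸ hTbar).comp_of_map measurable_fst.aemeasurable).sub
        (hy i)).integrable_norm_sq.div_const 2)
      (ae_of_all _ fun _ ↦ by positivity)).symm
  rw [← ofReal_integral_eq_lintegral_ofReal (hdisp.integrable_norm_sq.div_const 2)
    (ae_of_all _ fun _ ↦ by positivity)]
  calc Vfun τ α ν (μ.map Tbar) + ENNReal.ofReal (∫ x, ‖Tbar x - x‖ ^ 2 / 2 ∂μ)
      ≤ ∑ i, ENNReal.ofReal (α i) * (ENNReal.ofReal (c' i)
          + ENNReal.ofReal τ * Dpsi ((γ i).map Prod.snd) (ν i))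
        + ENNReal.ofReal (∫ x, ‖Tbar x - x‖ ^ 2 / 2 ∂μ) := by
        unfold Vfun
        gcongr with i
        exact hcost' i ▸ UOTcost_map_le τ (hγ i).1 measurable_averageMap
    _ = ∑ i, ENNReal.ofReal (α i) * (ENNReal.ofReal (c i)
          + ENNReal.ofReal τ * Dpsi ((γ i).map Prod.snd) (ν i)) :=
        ENNReal.sum_ofReal_mul_add_ofReal_eq _ _ hα (fun _ ↦ integral_nonneg fun _ ↦ by positivity)
          (fun _ ↦ integral_nonneg fun _ ↦ by positivity)
          (integral_nonneg fun _ ↦ by positivity) hbalance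
    _ = Vfun τ α ν μ := by simp only [Vfun, ← hcost, (hγ _).2]

theorem objective_eq_iff_averageMap_fixed_general
    {d N : ℕ} (τ : ℝ)
    (μ : Measure (Ed d)) [IsProbabilityMeasure μ]
    (hμ : Integrable (fun x => ‖x‖ ^ 2) μ)
    (ν : Fin N → Measure (Ed d)) [∀ i, IsProbabilityMeasure (ν i)]
    (hν : ∀ i, Integrable (fun x => ‖x‖ ^ 2) (ν i))
    (α : Fin N → ℝ) (hα : ∀ i, 0 ≤ α i) (hαsum : ∑ i, α i = 1)
    (γ : Fin N → Measure (Ed d × Ed d)) [∀ i, IsFiniteMeasure (γ i)]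
    (hγ : ∀ i, IsOptimalCoupling τ μ (ν i) (γ i))
    (T : Fin N → Ed d → Ed d)
    (hT : ∀ i x, T i x = ∫ y, y ∂((γ i).condKernel x))
    (Tbar : Ed d → Ed d)
    (hTbar : ∀ x, Tbar x = ∑ i, α i • T i x) :
    Vfun τ α ν μ = Vfun τ α ν (μ.map Tbar) ↔ ∀ᵐ x ∂μ, Tbar x = x := by
  have hμ2 : MemLp id 2 μ := (memLp_two_iff_integrable_sq_norm aestronglyMeasurable_id).2 hμ
  have hfin i : UOTcost τ μ (ν i) ≠ ⊤ := UOTcost_ne_top τ hμ2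
    ((memLp_two_iff_integrable_sq_norm aestronglyMeasurable_id).2 (hν i))
  obtain rfl : Tbar = averageMap α γ := funext fun x ↦ by
    simp only [hTbar, hT, averageMap, barycentricProjection]
  refine ⟨fun h ↦ ?_, fun h ↦ ?_⟩
  · have hV : Vfun τ α ν μ ≠ ⊤ :=
      ENNReal.sum_ne_top.2 fun i _ ↦ ENNReal.mul_ne_top ENNReal.ofReal_ne_top (hfin i)
    have key := Vfun_map_averageMap_add_le hμ2 hα hαsum hγ hfin
    rw [← h] at key
    have hzero : ∫⁻ x, ENNReal.ofReal (‖averageMap α γ x - x‖ ^ 2 / 2) ∂μ = 0 :=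
      nonpos_iff_eq_zero.1 (ENNReal.le_of_add_le_add_left hV (by rwa [add_zero]))
    filter_upwards [(lintegral_eq_zero_iff (by fun_prop)).1 hzero] with x hx
    rw [← sub_eq_zero, ← norm_le_zero_iff]
    nlinarith [ENNReal.ofReal_eq_zero.1 hx, norm_nonneg (averageMap α γ x - x)]
  · rw [Measure.map_congr (h.mono fun _ hx ↦ hx : averageMap α γ =ᵐ[μ] id), Measure.map_id]

theorem objective_eq_iff_averageMap_fixed
    {d N : ℕ} (hd : 1 ≤ d) (τ : ℝ) (hτ : 0 < τ)
    (μ : Measure (Ed d)) [IsProbabilityMeasure μ]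
    (hμ : Integrable (fun x => ‖x‖ ^ 2) μ)
    (ν : Fin N → Measure (Ed d)) [∀ i, IsProbabilityMeasure (ν i)]
    (hν : ∀ i, Integrable (fun x => ‖x‖ ^ 2) (ν i))
    (α : Fin N → ℝ) (hα : ∀ i, 0 ≤ α i) (hαsum : ∑ i, α i = 1)
    (γ : Fin N → Measure (Ed d × Ed d)) [∀ i, IsFiniteMeasure (γ i)]
    (hγ : ∀ i, IsOptimalCoupling τ μ (ν i) (γ i))
    (T : Fin N → Ed d → Ed d)
    (hT : ∀ i x, T i x = ∫ y, y ∂((γ i).condKernel x))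
    (Tbar : Ed d → Ed d)
    (hTbar : ∀ x, Tbar x = ∑ i, α i • T i x) :
    Vfun τ α ν μ = Vfun τ α ν (μ.map Tbar) ↔ ∀ᵐ x ∂μ, Tbar x = x :=
  objective_eq_iff_averageMap_fixed_general τ μ hμ ν hν α hα hαsum γ hγ T hT Tbar hTbar
end
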